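/- For each n ≥ 1 let Q(n) := Σ_{i=1}^n ( ∫_{B(0,√n)} (1 − xᵢ²) dγₙ(x) )², where B(0,√n) ⊂ ℝⁿ. Then Q(n) is strictly increasing in n, and lim_{n→∞} Q(n) = 1/π. More generally, for each fixed s ∈ ℝ, setting Q_s(n) := Σ_{i=1}^n ( ∫_{B(0,√(n + s√(2n)))} (1 − xᵢ²) dγₙ(x) )² (defined for n large enough that n + s√(2n) > 0), one has lim_{n→∞} Q_s(n) = e^{-s²}/π. -/

import Mathlib

open MeasureTheory Real

/-- The standard Gaussian measure on `ℝⁿ`. -/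
noncomputable def gaussianMeasure (n : ℕ) : Measure (EuclideanSpace ℝ (Fin n)) :=
  volume.withDensity (fun x => ENNReal.ofReal ((2 * π) ^ (-(n : ℝ) / 2) * Real.exp (-‖x‖ ^ 2 / 2)))

/-- `Q(n) := Σ_{i=1}^n (∫_{B(0,√n)} (1 − xᵢ²) dγₙ)²`. -/
noncomputable def Qfun (n : ℕ) : ℝ :=
  ∑ i : Fin n,
    (∫ x in Metric.ball (0 : EuclideanSpace ℝ (Fin n)) (Real.sqrt n),
      (1 - (x i) ^ 2) ∂gaussianMeasure n) ^ 2

/-- `Q_s(n) := Σ_{i=1}^n (∫_{B(0,√(n + s√(2n)))} (1 − xᵢ²) dγₙ)²`. -/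
noncomputable def Qs (s : ℝ) (n : ℕ) : ℝ :=
  ∑ i : Fin n,
    (∫ x in Metric.ball (0 : EuclideanSpace ℝ (Fin n)) (Real.sqrt (n + s * Real.sqrt (2 * n))),
      (1 - (x i) ^ 2) ∂gaussianMeasure n) ^ 2


open MeasureTheory Real Filter Set
open scoped ENNReal NNReal

namespace Aux

noncomputable def gfun (t : ℝ) : ℝ := (t + 1/2) * (Real.log (t+1) - Real.log t) - 1

noncomputable def Gfun (x : ℝ) : ℝ := Real.log (Real.Gamma (x+1)) - (x + 1/2) * Real.log x + x

lemma log_lt_aux {u : ℝ} (hu : 0 < u) : Real.log (1+u) < u*(u+2)/(2*(u+1)) := by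
  set h : ℝ → ℝ := fun u => u*(u+2)/(2*(u+1)) - Real.log (1+u) with hh
  have hd : ∀ u ∈ interior (Ici (0:ℝ)), HasDerivAt h (u^2/(2*(u+1)^2)) u := by
    intro u hu
    rw [interior_Ici] at hu
    have hu : (0:ℝ) < u := hu
    have h1 : HasDerivAt (fun u : ℝ => u*(u+2)/(2*(u+1)))
        (((2*u+2)*(2*(u+1)) - u*(u+2)*2)/(2*(u+1))^2) u := by
      have hn : HasDerivAt (fun u : ℝ => u*(u+2)) (2*u+2) u := by
        have := (hasDerivAt_id u).mul ((hasDerivAt_id u).add_const 2)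
        refine this.congr_deriv ?_; simp [id]; ring
      have hdd : HasDerivAt (fun u : ℝ => 2*(u+1)) 2 u := by
        have := ((hasDerivAt_id u).add_const 1).const_mul (2:ℝ)
        refine this.congr_deriv ?_; ring
      exact hn.div hdd (by positivity)
    have h2 : HasDerivAt (fun u : ℝ => Real.log (1+u)) (1/(1+u)) u := by
      simpa using ((hasDerivAt_id u).const_add 1).log (by positivity)
    have := h1.sub h2
    refine this.congr_deriv ?_
    field_simp
    ring
  have hmono : StrictMonoOn h (Ici 0) := by
    apply strictMonoOn_of_deriv_pos (convex_Ici 0)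
    · apply ContinuousOn.sub
      · apply ContinuousOn.div
        · fun_prop
        · fun_prop
        · intro x hx; have : (0:ℝ) ≤ x := hx; positivity
      · apply ContinuousOn.log
        · fun_prop
        · intro x hx; have : (0:ℝ) ≤ x := hx; positivity
    · intro x hx
      rw [(hd x hx).deriv]
      rw [interior_Ici] at hx
      have : (0:ℝ) < x := hx
      positivity
  have h0 : h 0 = 0 := by simp [hh]
  have := hmono (self_mem_Ici) (le_of_lt hu : (0:ℝ) ≤ u) hu
  rw [h0] at this
  simpa [hh, sub_pos] using this

lemma gfun_strictAnti : StrictAntiOn gfun (Ioi 0) := by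
  apply strictAntiOn_of_deriv_neg (convex_Ioi 0)
  · apply ContinuousOn.sub
    · apply ContinuousOn.mul
      · fun_prop
      · apply ContinuousOn.sub
        · apply ContinuousOn.log
          · fun_prop
          · intro x hx; have : (0:ℝ) < x := hx; positivity
        · apply ContinuousOn.log
          · fun_prop
          · intro x hx; have : (0:ℝ) < x := hx; positivity
    · fun_prop
  · intro t ht
    rw [interior_Ioi] at ht
    have ht : (0:ℝ) < t := ht
    have hd : HasDerivAt gfun ((Real.log (t+1) - Real.log t) + (t+1/2)*(1/(t+1) - 1/t)) t := by
      have h1 : HasDerivAt (fun t : ℝ => Real.log (t+1) - Real.log t) (1/(t+1) - 1/t) t := by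
        have ha := ((hasDerivAt_id t).add_const 1).log (by positivity)
        have hb := (hasDerivAt_id t).log (ne_of_gt ht)
        exact ha.sub hb
      have h2 : HasDerivAt (fun t : ℝ => t + 1/2) 1 t := (hasDerivAt_id t).add_const _
      have := h2.mul h1
      have h3 : HasDerivAt gfun (1 * (Real.log (t+1) - Real.log t) + (t+1/2)*(1/(t+1) - 1/t)) t := by
        unfold gfun
        exact (this).sub_const 1
      convert h3 using 1; ring
    rw [hd.deriv]
    have key : Real.log (t+1) - Real.log t < (t+1/2)*(1/t - 1/(t+1)) := by
      have h1 : Real.log (t+1) - Real.log t = Real.log (1 + 1/t) := by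
        rw [← Real.log_div (by positivity) (ne_of_gt ht)]
        congr 1
        field_simp
      have h2 := log_lt_aux (u := 1/t) (by positivity)
      rw [h1]
      have h3 : (1/t)*((1/t)+2)/(2*((1/t)+1)) = (t+1/2)*(1/t - 1/(t+1)) := by
        field_simp
        ring
      linarith [h2, h3.le, h3.ge]
    linarith [key]



lemma Gfun_sub_succ {x : ℝ} (hx : 0 < x) : Gfun x - Gfun (x+1) = gfun x := by
  have h1 : Real.Gamma (x+1+1) = (x+1) * Real.Gamma (x+1) := Real.Gamma_add_one (by positivity)
  unfold Gfun gfun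
  rw [h1, Real.log_mul (by positivity) (ne_of_gt (Real.Gamma_pos_of_pos (by positivity)))]
  ring

lemma Gfun_sub_nat {x : ℝ} (hx : 0 < x) (N : ℕ) :
    Gfun x - Gfun (x+N) = ∑ k ∈ Finset.range N, gfun (x+k) := by
  induction N with
  | zero => simp
  | succ N ih =>
    rw [Finset.sum_range_succ, ← ih]
    have h := Gfun_sub_succ (x := x + N) (by positivity)
    have : x + (N+1:ℕ) = (x + N) + 1 := by push_cast; ring
    rw [this]
    ring_nf
    ring_nf at h ih ⊢
    linarith

lemma logGamma_slope_lower {t d : ℝ} (ht : 0 < t) (hd : 0 < d) :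
    d * Real.log t ≤ Real.log (Real.Gamma (t+1+d)) - Real.log (Real.Gamma (t+1)) := by
  have h := Real.convexOn_log_Gamma.slope_mono_adjacent (x := t) (y := t+1) (z := t+1+d)
    (by simpa using ht) (by simp only [mem_Ioi]; linarith) (by linarith) (by linarith)
  simp only [Function.comp] at h
  have h2 : Real.Gamma (t+1) = t * Real.Gamma t := Real.Gamma_add_one (ne_of_gt ht)
  rw [h2, Real.log_mul (ne_of_gt ht) (ne_of_gt (Real.Gamma_pos_of_pos ht))] at h
  have h3 : (t+1) - t = 1 := by ring
  have h4 : (t+1+d) - (t+1) = d := by ring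
  rw [h3, h4] at h
  simp only [div_one] at h
  rw [h2, Real.log_mul (ne_of_gt ht) (ne_of_gt (Real.Gamma_pos_of_pos ht))]
  have h' : Real.log t ≤ (Real.log (Real.Gamma (t+1+d)) - (Real.log t + Real.log (Real.Gamma t)))/d := by
    linarith
  have := (le_div_iff₀ hd).mp h'
  linarith

lemma logGamma_slope_upper {t d : ℝ} (ht : 0 < t) (hd : 0 < d) :
    Real.log (Real.Gamma (t+1+d)) - Real.log (Real.Gamma (t+1)) ≤ d * Real.log (t+1+d) := by
  have h := Real.convexOn_log_Gamma.slope_mono_adjacent (x := t+1) (y := t+1+d) (z := t+2+d)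
    (by simp only [mem_Ioi]; linarith) (by simp only [mem_Ioi]; linarith) (by linarith) (by linarith)
  simp only [Function.comp] at h
  have h2 : Real.Gamma (t+2+d) = (t+1+d) * Real.Gamma (t+1+d) := by
    have : t+2+d = (t+1+d)+1 := by ring
    rw [this, Real.Gamma_add_one (by positivity)]
  rw [h2, Real.log_mul (by positivity) (ne_of_gt (Real.Gamma_pos_of_pos (by positivity)))] at h
  have h4 : (t+1+d) - (t+1) = d := by ring
  have h5 : (t+2+d) - (t+1+d) = 1 := by ring
  rw [h4, h5] at h
  simp only [div_one] at h
  have := (div_le_iff₀ hd).mp h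
  linarith [this]

lemma Gfun_tail_upper {t d : ℝ} (ht : 0 < t) (hd : 0 < d) :
    Gfun t - Gfun (t+d) ≤ (t+d+1/2) * (Real.log (t+d) - Real.log t) - d := by
  have h := logGamma_slope_lower ht hd
  unfold Gfun
  ring_nf at h ⊢
  linarith

lemma Gfun_tail_lower {t d : ℝ} (ht : 0 < t) (hd : 0 < d) :
    (t+1/2) * (Real.log (t+d) - Real.log t) - d * (Real.log (t+1+d) - Real.log (t+d)) - d
      ≤ Gfun t - Gfun (t+d) := by
  have h := logGamma_slope_upper ht hd
  unfold Gfun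
  ring_nf at h ⊢
  linarith


lemma tendA (d : ℝ) : Tendsto (fun t:ℝ => t * (Real.log (t+d) - Real.log t)) atTop (nhds d) := by
  apply (Real.tendsto_mul_log_one_add_div_atTop d).congr'
  filter_upwards [eventually_gt_atTop (0:ℝ), eventually_gt_atTop (-d)] with t ht htd
  rw [← Real.log_div (by linarith) (ne_of_gt ht)]
  congr 2
  field_simp

lemma tendB (d : ℝ) : Tendsto (fun t:ℝ => Real.log (t+d) - Real.log t) atTop (nhds 0) := by
  have h1 : Tendsto (fun t:ℝ => t⁻¹ * (t * (Real.log (t+d) - Real.log t))) atTop (nhds (0 * d)) :=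
    Tendsto.mul tendsto_inv_atTop_zero (tendA d)
  rw [zero_mul] at h1
  apply h1.congr'
  filter_upwards [eventually_gt_atTop (0:ℝ)] with t ht
  field_simp

lemma Gfun_tail_tendsto {x d : ℝ} (hx : 0 < x) (hd : 0 < d) :
    Tendsto (fun N : ℕ => Gfun (x+N) - Gfun (x+N+d)) atTop (nhds 0) := by
  have hcomp : Tendsto (fun N : ℕ => x + (N:ℝ)) atTop atTop :=
    tendsto_atTop_add_const_left _ x tendsto_natCast_atTop_atTop
  have hU : Tendsto (fun t:ℝ => (t+d+1/2) * (Real.log (t+d) - Real.log t) - d) atTop (nhds 0) := by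
    have h1 : Tendsto (fun t:ℝ => t * (Real.log (t+d) - Real.log t)
        + (d+1/2) * (Real.log (t+d) - Real.log t) - d) atTop (nhds (d + (d+1/2)*0 - d)) :=
      ((tendA d).add ((tendB d).const_mul (d+1/2))).sub_const d
    have h2 : d + (d+1/2)*0 - d = 0 := by ring
    rw [h2] at h1
    apply h1.congr
    intro t; ring
  have hL : Tendsto (fun t:ℝ => (t+1/2) * (Real.log (t+d) - Real.log t)
      - d * (Real.log (t+1+d) - Real.log (t+d)) - d) atTop (nhds 0) := by
    have hB2 : Tendsto (fun t:ℝ => Real.log (t+1+d) - Real.log (t+d)) atTop (nhds 0) := by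
      have := (tendB 1).comp (tendsto_atTop_add_const_right atTop d tendsto_id)
      apply this.congr
      intro t
      simp only [Function.comp, id]
      ring_nf
    have h1 : Tendsto (fun t:ℝ => (t * (Real.log (t+d) - Real.log t)
        + (1/2) * (Real.log (t+d) - Real.log t))
        - d * (Real.log (t+1+d) - Real.log (t+d)) - d) atTop (nhds ((d + (1/2)*0) - d*0 - d)) :=
      (((tendA d).add ((tendB d).const_mul (1/2))).sub (hB2.const_mul d)).sub_const d
    have h2 : (d + (1/2)*0) - d*0 - d = 0 := by ring
    rw [h2] at h1
    apply h1.congr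
    intro t; ring
  apply tendsto_of_tendsto_of_tendsto_of_le_of_le (hL.comp hcomp) (hU.comp hcomp)
  · intro N
    exact Gfun_tail_lower (by positivity) hd
  · intro N
    exact Gfun_tail_upper (by positivity) hd

lemma Gfun_strictAnti : StrictAntiOn Gfun (Ioi 0) := by
  intro x hx y hy hxy
  have hx : (0:ℝ) < x := hx
  have hy : (0:ℝ) < y := hy
  set d := y - x with hdd
  have hd : 0 < d := by simp [hdd]; linarith
  have key : ∀ N : ℕ, 1 ≤ N →
      gfun x - gfun y + (Gfun (x+N) - Gfun (x+N+d)) ≤ Gfun x - Gfun y := by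
    intro N hN
    have h1 := Gfun_sub_nat hx N
    have h2 := Gfun_sub_nat hy N
    have hxy' : x + d = y := by simp [hdd]
    have hsum : gfun x - gfun y ≤
        ∑ k ∈ Finset.range N, (gfun (x+k) - gfun (y+k)) := by
      have hterm : ∀ k ∈ Finset.range N, 0 ≤ gfun (x+k) - gfun (y+k) := by
        intro k _
        have := gfun_strictAnti (a := x+k) (b := y+k) (by simp only [mem_Ioi]; positivity)
          (by simp only [mem_Ioi]; positivity) (by linarith)
        linarith
      have h0 : (0:ℕ) ∈ Finset.range N := Finset.mem_range.mpr hN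
      have := Finset.single_le_sum hterm h0
      simpa using this
    have hre : ∑ k ∈ Finset.range N, (gfun (x+k) - gfun (y+k))
        = (Gfun x - Gfun (x+N)) - (Gfun y - Gfun (y+N)) := by
      rw [h1, h2, Finset.sum_sub_distrib]
    have hyN : y + (N:ℝ) = x + N + d := by rw [hdd]; ring
    rw [← hyN]
    linarith [hsum, hre]
  have hlim : Tendsto (fun N : ℕ => gfun x - gfun y + (Gfun (x+N) - Gfun (x+N+d)))
      atTop (nhds (gfun x - gfun y)) := by
    have := (Gfun_tail_tendsto hx hd).const_add (gfun x - gfun y)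
    simpa using this
  have hge : gfun x - gfun y ≤ Gfun x - Gfun y := by
    apply le_of_tendsto hlim
    filter_upwards [eventually_ge_atTop 1] with N hN using key N hN
  have hgxy : gfun y < gfun x := gfun_strictAnti hx hy hxy
  linarith

lemma Gfun_nat_tendsto :
    Tendsto (fun m : ℕ => Gfun m) atTop (nhds (Real.log (2*π) / 2)) := by
  have hstir := Stirling.tendsto_stirlingSeq_sqrt_pi
  have hlog : Tendsto (fun m : ℕ => Real.log (Stirling.stirlingSeq m)) atTop
      (nhds (Real.log (Real.sqrt π))) :=
    ((Real.continuousAt_log (by positivity)).tendsto.comp hstir)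
  have heq : ∀ᶠ m : ℕ in atTop, Real.log (Stirling.stirlingSeq m) + Real.log 2 / 2 = Gfun m := by
    filter_upwards [eventually_ge_atTop 1] with m hm
    have hm0 : (0:ℝ) < m := by exact_mod_cast hm
    unfold Stirling.stirlingSeq Gfun
    rw [Real.log_div (by positivity) (by positivity), Real.log_mul (by positivity) (by positivity),
      Real.log_pow, Real.log_div (by positivity) (ne_of_gt (Real.exp_pos 1)),
      Real.log_sqrt (by positivity), Real.log_mul (by norm_num) (ne_of_gt hm0),
      Real.log_exp]
    have : Real.Gamma ((m:ℝ)+1) = Nat.factorial m := by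
      exact_mod_cast Real.Gamma_nat_eq_factorial m
    rw [this]
    have hfac : (0:ℝ) < Nat.factorial m := by positivity
    ring
  have h2 : Tendsto (fun m : ℕ => Real.log (Stirling.stirlingSeq m) + Real.log 2 / 2) atTop
      (nhds (Real.log (Real.sqrt π) + Real.log 2 / 2)) := hlog.add_const _
  have h3 : Real.log (Real.sqrt π) + Real.log 2 / 2 = Real.log (2*π) / 2 := by
    rw [Real.log_sqrt (le_of_lt Real.pi_pos), Real.log_mul (by norm_num) (ne_of_gt Real.pi_pos)]
    ring
  rw [h3] at h2
  exact h2.congr' heq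

lemma Gfun_half_tendsto :
    Tendsto (fun n : ℕ => Gfun ((n:ℝ)/2)) atTop (nhds (Real.log (2*π) / 2)) := by
  have hdiv : Tendsto (fun n : ℕ => n / 2) atTop atTop := by
    apply tendsto_atTop_atTop.2
    intro b
    exact ⟨2*b, fun n hn => by omega⟩
  have h1 : Tendsto (fun n : ℕ => Gfun ((n/2 : ℕ) : ℝ)) atTop (nhds (Real.log (2*π) / 2)) := by
    have := Gfun_nat_tendsto.comp hdiv
    exact this.congr (fun n => rfl)
  have hdiv1 : Tendsto (fun n : ℕ => n / 2 + 1) atTop atTop := by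
    apply tendsto_atTop_atTop.2
    intro b
    exact ⟨2*b, fun n hn => by omega⟩
  have h2 : Tendsto (fun n : ℕ => Gfun ((n/2 + 1 : ℕ) : ℝ)) atTop (nhds (Real.log (2*π) / 2)) := by
    have := Gfun_nat_tendsto.comp hdiv1
    exact this.congr (fun n => rfl)
  apply tendsto_of_tendsto_of_tendsto_of_le_of_le' h2 h1
  · filter_upwards [eventually_ge_atTop 2] with n hn
    have hm : 1 ≤ n / 2 := by omega
    have hc : (n:ℝ)/2 ≤ ((n/2 + 1 : ℕ) : ℝ) := by
      have : n < 2 * (n/2 + 1) := by omega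
      have := (Nat.cast_lt (α := ℝ)).mpr this
      push_cast at this ⊢
      linarith
    apply Gfun_strictAnti.antitoneOn _ _ hc
    · simp only [mem_Ioi]
      have : (0:ℝ) < n := by positivity
      linarith
    · simp only [mem_Ioi]
      positivity
  · filter_upwards [eventually_ge_atTop 2] with n hn
    have hm : 1 ≤ n / 2 := by omega
    have hc : ((n/2 : ℕ) : ℝ) ≤ (n:ℝ)/2 := by
      have : 2 * (n/2) ≤ n := by omega
      have := (Nat.cast_le (α := ℝ)).mpr this
      push_cast at this ⊢
      linarith
    apply Gfun_strictAnti.antitoneOn _ _ hc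
    · simp only [mem_Ioi]
      exact_mod_cast hm
    · simp only [mem_Ioi]
      have : (0:ℝ) < n := by positivity
      linarith

end Aux



namespace Aux

variable {n : ℕ}

lemma dens_cont (n : ℕ) :
    Continuous (fun x : EuclideanSpace ℝ (Fin n) => (2 * π) ^ (-(n : ℝ) / 2) * Real.exp (-‖x‖ ^ 2 / 2)) := by
  fun_prop

lemma dens_pos (n : ℕ) (x : EuclideanSpace ℝ (Fin n)) :
    0 < (2 * π) ^ (-(n : ℝ) / 2) * Real.exp (-‖x‖ ^ 2 / 2) := by
  have h2π : (0:ℝ) < 2 * π := by positivity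
  positivity

lemma setIntegral_gauss (n : ℕ) {s : Set (EuclideanSpace ℝ (Fin n))} (hs : MeasurableSet s)
    (f : EuclideanSpace ℝ (Fin n) → ℝ) :
    ∫ x in s, f x ∂gaussianMeasure n
      = ∫ x, s.indicator
          (fun x => ((2 * π) ^ (-(n : ℝ) / 2) * Real.exp (-‖x‖ ^ 2 / 2)) * f x) x := by
  rw [gaussianMeasure]
  have hmeas : Measurable fun x : EuclideanSpace ℝ (Fin n) =>
      ((2 * π) ^ (-(n : ℝ) / 2) * Real.exp (-‖x‖ ^ 2 / 2)).toNNReal :=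
    ((dens_cont n).measurable).real_toNNReal
  have h1 : (fun x : EuclideanSpace ℝ (Fin n) =>
      ENNReal.ofReal ((2 * π) ^ (-(n : ℝ) / 2) * Real.exp (-‖x‖ ^ 2 / 2)))
      = fun x => (((2 * π) ^ (-(n : ℝ) / 2) * Real.exp (-‖x‖ ^ 2 / 2)).toNNReal : ℝ≥0∞) := rfl
  rw [h1, setIntegral_withDensity_eq_setIntegral_smul hmeas f hs, ← integral_indicator hs]
  congr 1
  ext x
  rcases Classical.em (x ∈ s) with h | h
  · simp only [Set.indicator_of_mem h, NNReal.smul_def, Real.coe_toNNReal _ (dens_pos n x).le,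
      smul_eq_mul]
  · simp [Set.indicator_of_notMem h]

lemma coord_integral_eq (n : ℕ) (ρ : ℝ) (i j : Fin n) :
    ∫ x in Metric.ball (0 : EuclideanSpace ℝ (Fin n)) ρ, (1 - (x i)^2) ∂gaussianMeasure n
      = ∫ x in Metric.ball (0 : EuclideanSpace ℝ (Fin n)) ρ, (1 - (x j)^2) ∂gaussianMeasure n := by
  rw [setIntegral_gauss n measurableSet_ball, setIntegral_gauss n measurableSet_ball]
  set e := LinearIsometryEquiv.piLpCongrLeft 2 ℝ ℝ (Equiv.swap i j) with he
  have hmp : MeasurePreserving e volume volume := e.measurePreserving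
  have hint := hmp.integral_comp (g := fun x : EuclideanSpace ℝ (Fin n) =>
      (Metric.ball (0 : EuclideanSpace ℝ (Fin n)) ρ).indicator
      (fun x => ((2 * π) ^ (-(n : ℝ) / 2) * Real.exp (-‖x‖ ^ 2 / 2)) * (1 - (x i)^2)) x)
    e.toHomeomorph.measurableEmbedding
  rw [← hint]
  congr 1
  ext x
  have hnorm : ‖(e x : EuclideanSpace ℝ (Fin n))‖ = ‖x‖ := e.norm_map x
  have hmem : (e x : EuclideanSpace ℝ (Fin n)) ∈ Metric.ball (0 : EuclideanSpace ℝ (Fin n)) ρ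
      ↔ x ∈ Metric.ball (0 : EuclideanSpace ℝ (Fin n)) ρ := by
    simp [mem_ball_zero_iff, hnorm]
  have happ : (e x : EuclideanSpace ℝ (Fin n)) i = x j := by
    rw [he]
    rw [LinearIsometryEquiv.piLpCongrLeft_apply]
    rw [Equiv.piCongrLeft'_apply, Equiv.symm_swap, Equiv.swap_apply_left]
  rcases Classical.em (x ∈ Metric.ball (0 : EuclideanSpace ℝ (Fin n)) ρ) with h | h
  · rw [Set.indicator_of_mem (hmem.mpr h), Set.indicator_of_mem h, hnorm, happ]
  · rw [Set.indicator_of_notMem (fun hc => h (hmem.mp hc)), Set.indicator_of_notMem h]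


lemma ftc_radial (n : ℕ) (hn : 1 ≤ n) (ρ : ℝ) (hρ : 0 ≤ ρ) (c : ℝ) :
    ∫ y in Ioo (0:ℝ) ρ, y ^ (n-1) * (c * Real.exp (-y^2/2) * ((n:ℝ) - y^2))
      = c * (ρ^n * Real.exp (-ρ^2/2)) := by
  obtain ⟨m, rfl⟩ : ∃ m, n = m + 1 := ⟨n-1, by omega⟩
  have hderiv : ∀ t ∈ uIcc (0:ℝ) ρ,
      HasDerivAt (fun y : ℝ => c * (y^(m+1) * Real.exp (-y^2/2)))
        (t ^ (m+1-1) * (c * Real.exp (-t^2/2) * (((m+1:ℕ):ℝ) - t^2))) t := by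
    intro t _
    have h1 : HasDerivAt (fun y : ℝ => y^(m+1)) ((m+1) * t^m) t := by
      simpa using hasDerivAt_pow (m+1) t
    have h2 : HasDerivAt (fun y : ℝ => Real.exp (-y^2/2)) ((-t) * Real.exp (-t^2/2)) t := by
      have hq : HasDerivAt (fun y : ℝ => -y^2/2) (-t) t := by
        have := ((hasDerivAt_pow 2 t).neg).div_const 2
        refine this.congr_deriv ?_
        push_cast
        ring
      simpa [mul_comm] using hq.exp
    have := ((h1.mul h2).const_mul c)
    refine this.congr_deriv ?_
    simp only [Nat.add_sub_cancel]
    push_cast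
    ring
  have hcont : IntervalIntegrable
      (fun y : ℝ => y ^ (m+1-1) * (c * Real.exp (-y^2/2) * (((m+1:ℕ):ℝ) - y^2))) volume 0 ρ := by
    apply Continuous.intervalIntegrable
    fun_prop
  have hftc := intervalIntegral.integral_eq_sub_of_hasDerivAt hderiv hcont
  rw [intervalIntegral.integral_of_le hρ, integral_Ioc_eq_integral_Ioo] at hftc
  rw [hftc]
  rw [zero_pow (by omega : m + 1 ≠ 0)]
  norm_num


lemma integrableOn_ball (n : ℕ) (ρ : ℝ) (f : EuclideanSpace ℝ (Fin n) → ℝ)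
    (hf : Continuous f) :
    IntegrableOn f (Metric.ball (0 : EuclideanSpace ℝ (Fin n)) ρ) (gaussianMeasure n) := by
  have hfin : gaussianMeasure n (Metric.ball (0 : EuclideanSpace ℝ (Fin n)) ρ) < ⊤ := by
    rw [gaussianMeasure, withDensity_apply _ measurableSet_ball]
    have hle : ∫⁻ x in Metric.ball (0 : EuclideanSpace ℝ (Fin n)) ρ,
        ENNReal.ofReal ((2 * π) ^ (-(n : ℝ) / 2) * Real.exp (-‖x‖ ^ 2 / 2))
        ≤ ∫⁻ _ in Metric.ball (0 : EuclideanSpace ℝ (Fin n)) ρ,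
            ENNReal.ofReal ((2 * π) ^ (-(n : ℝ) / 2)) := by
      apply lintegral_mono
      intro x
      apply ENNReal.ofReal_le_ofReal
      have h1 : Real.exp (-‖x‖ ^ 2 / 2) ≤ 1 := by
        apply Real.exp_le_one_iff.mpr
        have : (0:ℝ) ≤ ‖x‖^2 := sq_nonneg _
        linarith
      have h2 : (0:ℝ) ≤ (2 * π) ^ (-(n : ℝ) / 2) := by positivity
      calc (2 * π) ^ (-(n : ℝ) / 2) * Real.exp (-‖x‖ ^ 2 / 2)
          ≤ (2 * π) ^ (-(n : ℝ) / 2) * 1 := by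
            apply mul_le_mul_of_nonneg_left h1 h2
        _ = (2 * π) ^ (-(n : ℝ) / 2) := mul_one _
    apply lt_of_le_of_lt hle
    rw [setLIntegral_const]
    exact ENNReal.mul_lt_top ENNReal.ofReal_lt_top measure_ball_lt_top
  haveI : IsFiniteMeasure ((gaussianMeasure n).restrict
      (Metric.ball (0 : EuclideanSpace ℝ (Fin n)) ρ)) := by
    constructor
    rwa [Measure.restrict_apply_univ]
  obtain ⟨C, hC⟩ := (isCompact_closedBall (0 : EuclideanSpace ℝ (Fin n)) ρ).exists_bound_of_continuousOn
    hf.continuousOn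
  apply Integrable.mono' (integrable_const C) hf.aestronglyMeasurable
  rw [ae_restrict_iff' measurableSet_ball]
  apply ae_of_all
  intro x hx
  exact hC x (Metric.ball_subset_closedBall hx)

lemma radial_integral (n : ℕ) (hn : 1 ≤ n) (ρ : ℝ) (hρ : 0 ≤ ρ) :
    ∫ x in Metric.ball (0 : EuclideanSpace ℝ (Fin n)) ρ, ((n:ℝ) - ‖x‖^2) ∂gaussianMeasure n
      = (n:ℝ) * ((volume (Metric.ball (0 : EuclideanSpace ℝ (Fin n)) 1)).toReal *
          ((2 * π) ^ (-(n : ℝ) / 2) * (ρ^n * Real.exp (-ρ^2/2)))) := by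
  haveI : Nonempty (Fin n) := ⟨⟨0, hn⟩⟩
  haveI : Nontrivial (EuclideanSpace ℝ (Fin n)) := by
    refine ⟨⟨0, EuclideanSpace.single ⟨0, hn⟩ 1, ?_⟩⟩
    intro h
    have := congrArg (fun v : EuclideanSpace ℝ (Fin n) => v ⟨0, hn⟩) h.symm
    simp [EuclideanSpace.single_apply] at this
  rw [setIntegral_gauss n measurableSet_ball]
  set F : ℝ → ℝ := fun r => Set.indicator (Iio ρ)
    (fun r => ((2 * π) ^ (-(n : ℝ) / 2) * Real.exp (-r^2/2)) * ((n:ℝ) - r^2)) r with hF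
  have hpt : (fun x : EuclideanSpace ℝ (Fin n) =>
      (Metric.ball (0 : EuclideanSpace ℝ (Fin n)) ρ).indicator
        (fun x => ((2 * π) ^ (-(n : ℝ) / 2) * Real.exp (-‖x‖ ^ 2 / 2)) * ((n:ℝ) - ‖x‖^2)) x)
      = fun x => F ‖x‖ := by
    funext x
    rw [hF]
    by_cases h : ‖x‖ < ρ
    · rw [Set.indicator_of_mem (mem_ball_zero_iff.mpr h)]
      simp [Set.indicator_apply, h]
    · rw [Set.indicator_of_notMem (fun hc => h (mem_ball_zero_iff.mp hc))]
      simp [Set.indicator_apply, h]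
  rw [hpt, MeasureTheory.integral_fun_norm_addHaar (volume : Measure (EuclideanSpace ℝ (Fin n))) F]
  have hdim : Module.finrank ℝ (EuclideanSpace ℝ (Fin n)) = n := finrank_euclideanSpace_fin
  rw [hdim]
  have hinner : ∫ y in Ioi (0:ℝ), y ^ (n - 1) • F y
      = (2 * π) ^ (-(n : ℝ) / 2) * (ρ^n * Real.exp (-ρ^2/2)) := by
    have h1 : (fun y : ℝ => y ^ (n-1) • F y) = fun y => Set.indicator (Iio ρ)
        (fun y => y ^ (n-1) * (((2 * π) ^ (-(n : ℝ) / 2) * Real.exp (-y^2/2)) * ((n:ℝ) - y^2))) y := by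
      funext y
      rw [hF]
      simp only [Set.indicator_apply, smul_eq_mul]
      rcases Classical.em (y ∈ Iio ρ) with h | h
      · simp [h]
      · simp [h]
    rw [h1, setIntegral_indicator measurableSet_Iio, Set.Ioi_inter_Iio]
    have := ftc_radial n hn ρ hρ ((2 * π) ^ (-(n : ℝ) / 2))
    convert this using 2
  rw [hinner]
  rw [nsmul_eq_mul, smul_eq_mul]
  rfl


lemma coord_cont (n : ℕ) (i : Fin n) :
    Continuous (fun x : EuclideanSpace ℝ (Fin n) => (1:ℝ) - (x i)^2) := by
  have h : Continuous (fun x : EuclideanSpace ℝ (Fin n) => x i) := PiLp.continuous_apply 2 _ i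
  fun_prop

lemma coord_integral (n : ℕ) (hn : 1 ≤ n) (ρ : ℝ) (hρ : 0 ≤ ρ) (i : Fin n) :
    ∫ x in Metric.ball (0 : EuclideanSpace ℝ (Fin n)) ρ, (1 - (x i)^2) ∂gaussianMeasure n
      = (volume (Metric.ball (0 : EuclideanSpace ℝ (Fin n)) 1)).toReal *
          ((2 * π) ^ (-(n : ℝ) / 2) * (ρ^n * Real.exp (-ρ^2/2))) := by
  have hint : ∀ j : Fin n, IntegrableOn (fun x : EuclideanSpace ℝ (Fin n) => (1:ℝ) - (x j)^2)
      (Metric.ball (0 : EuclideanSpace ℝ (Fin n)) ρ) (gaussianMeasure n) :=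
    fun j => integrableOn_ball n ρ _ (coord_cont n j)
  have hsum : ∑ j : Fin n,
      (∫ x in Metric.ball (0 : EuclideanSpace ℝ (Fin n)) ρ, (1 - (x j)^2) ∂gaussianMeasure n)
      = ∫ x in Metric.ball (0 : EuclideanSpace ℝ (Fin n)) ρ, ((n:ℝ) - ‖x‖^2) ∂gaussianMeasure n := by
    rw [← integral_finset_sum Finset.univ (fun j _ => hint j)]
    apply setIntegral_congr_fun measurableSet_ball
    intro x _
    show ∑ j : Fin n, ((1:ℝ) - (x j)^2) = (n:ℝ) - ‖x‖^2
    rw [Finset.sum_sub_distrib, Finset.sum_const, Finset.card_univ, Fintype.card_fin]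
    have hx : ‖x‖^2 = ∑ j : Fin n, (x j)^2 := by
      rw [EuclideanSpace.norm_eq]
      rw [Real.sq_sqrt (Finset.sum_nonneg fun j _ => sq_nonneg _)]
      apply Finset.sum_congr rfl
      intro j _
      rw [Real.norm_eq_abs, sq_abs]
    rw [hx]
    simp
  have hall : ∀ j : Fin n,
      (∫ x in Metric.ball (0 : EuclideanSpace ℝ (Fin n)) ρ, (1 - (x j)^2) ∂gaussianMeasure n)
      = ∫ x in Metric.ball (0 : EuclideanSpace ℝ (Fin n)) ρ, (1 - (x i)^2) ∂gaussianMeasure n :=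
    fun j => coord_integral_eq n ρ j i
  rw [Finset.sum_congr rfl (fun j _ => hall j), Finset.sum_const, Finset.card_univ,
    Fintype.card_fin, radial_integral n hn ρ hρ] at hsum
  have hn' : (0:ℝ) < n := by exact_mod_cast hn
  rw [nsmul_eq_mul] at hsum
  exact mul_left_cancel₀ (ne_of_gt hn') hsum

lemma Q_formula (n : ℕ) (hn : 1 ≤ n) (R : ℝ) (hR : 0 ≤ R) :
    ∑ i : Fin n,
      (∫ x in Metric.ball (0 : EuclideanSpace ℝ (Fin n)) (Real.sqrt R),
        (1 - (x i) ^ 2) ∂gaussianMeasure n) ^ 2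
      = (n:ℝ) * ((Real.sqrt π ^ n / Real.Gamma (n/2+1))^2 *
          (((2 * π) ^ (-(n : ℝ) / 2))^2 * (R^n * Real.exp (-R)))) := by
  haveI : Nonempty (Fin n) := ⟨⟨0, hn⟩⟩
  have hω : (volume (Metric.ball (0 : EuclideanSpace ℝ (Fin n)) 1)).toReal
      = Real.sqrt π ^ n / Real.Gamma (n/2+1) := by
    rw [EuclideanSpace.volume_ball (Fin n) 0 1]
    rw [Fintype.card_fin]
    rw [ENNReal.ofReal_one, one_pow, one_mul]
    rw [ENNReal.toReal_ofReal (by positivity)]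
  have hcoord := fun i => coord_integral n hn (Real.sqrt R) (Real.sqrt_nonneg R) i
  rw [Finset.sum_congr rfl (fun i _ => by rw [hcoord i])]
  rw [Finset.sum_const, Finset.card_univ, Fintype.card_fin, nsmul_eq_mul, hω]
  have h1 : ((Real.sqrt R)^n)^2 = R^n := by
    rw [← pow_mul, mul_comm n 2, pow_mul, Real.sq_sqrt hR]
  have h2 : (Real.exp (-(Real.sqrt R)^2/2))^2 = Real.exp (-R) := by
    rw [← Real.exp_nat_mul, Real.sq_sqrt hR]
    congr 1
    push_cast
    ring
  rw [mul_pow, mul_pow, mul_pow]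
  rw [h1, h2]

end Aux

namespace Aux

lemma Qval_eq (n : ℕ) (hn : 1 ≤ n) (R : ℝ) (hR : 0 < R) :
    (n:ℝ) * ((Real.sqrt π ^ n / Real.Gamma ((n:ℝ)/2+1))^2 *
        (((2 * π) ^ (-(n : ℝ) / 2))^2 * (R^n * Real.exp (-R))))
    = 2 * Real.exp (-2 * Gfun ((n:ℝ)/2)) *
        Real.exp ((n:ℝ) * Real.log (R/(n:ℝ)) - (R - (n:ℝ))) := by
  have hπ : (0:ℝ) < π := Real.pi_pos
  have h2π : (0:ℝ) < 2 * π := by positivity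
  have hn' : (0:ℝ) < n := by exact_mod_cast hn
  have hΓ : (0:ℝ) < Real.Gamma ((n:ℝ)/2+1) := Real.Gamma_pos_of_pos (by positivity)
  have hLpos : (0:ℝ) < (n:ℝ) * ((Real.sqrt π ^ n / Real.Gamma ((n:ℝ)/2+1))^2 *
      (((2 * π) ^ (-(n : ℝ) / 2))^2 * (R^n * Real.exp (-R)))) := by positivity
  have hRpos : (0:ℝ) < 2 * Real.exp (-2 * Gfun ((n:ℝ)/2)) *
      Real.exp ((n:ℝ) * Real.log (R/(n:ℝ)) - (R - (n:ℝ))) := by positivity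
  apply Real.log_injOn_pos (mem_Ioi.mpr hLpos) (mem_Ioi.mpr hRpos)
  have e1 : Real.log ((n:ℝ) * ((Real.sqrt π ^ n / Real.Gamma ((n:ℝ)/2+1))^2 *
      (((2 * π) ^ (-(n : ℝ) / 2))^2 * (R^n * Real.exp (-R)))))
      = Real.log n + 2 * ((n:ℝ) * (Real.log π / 2) - Real.log (Real.Gamma ((n:ℝ)/2+1)))
        + 2 * ((-(n:ℝ)/2) * (Real.log 2 + Real.log π)) + (n:ℝ) * Real.log R + (-R) := by
    rw [Real.log_mul (ne_of_gt hn') (by positivity),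
      Real.log_mul (by positivity) (by positivity),
      Real.log_mul (by positivity) (by positivity),
      Real.log_mul (by positivity) (ne_of_gt (Real.exp_pos _)),
      Real.log_pow, Real.log_pow, Real.log_exp,
      Real.log_div (by positivity) (ne_of_gt hΓ), Real.log_pow,
      Real.log_rpow h2π, Real.log_sqrt hπ.le, Real.log_mul (by norm_num) (ne_of_gt hπ),
      Real.log_pow]
    push_cast
    ring
  have e2 : Real.log (2 * Real.exp (-2 * Gfun ((n:ℝ)/2)) *
      Real.exp ((n:ℝ) * Real.log (R/(n:ℝ)) - (R - (n:ℝ))))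
      = Real.log 2 + (-2 * Gfun ((n:ℝ)/2)) + ((n:ℝ) * (Real.log R - Real.log n) - (R - (n:ℝ))) := by
    rw [Real.log_mul (by positivity) (ne_of_gt (Real.exp_pos _)),
      Real.log_mul (by norm_num) (ne_of_gt (Real.exp_pos _)),
      Real.log_exp, Real.log_exp, Real.log_div (ne_of_gt hR) (ne_of_gt hn')]
  rw [e1, e2]
  unfold Gfun
  rw [Real.log_div (ne_of_gt hn') (by norm_num)]
  ring

lemma Qfun_eq (n : ℕ) (hn : 1 ≤ n) : Qfun n = 2 * Real.exp (-2 * Gfun ((n:ℝ)/2)) := by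
  have hn' : (0:ℝ) < n := by exact_mod_cast hn
  unfold Qfun
  rw [Q_formula n hn (n:ℝ) hn'.le, Qval_eq n hn (n:ℝ) hn']
  rw [div_self (ne_of_gt hn'), Real.log_one]
  simp

lemma base_tendsto :
    Tendsto (fun n : ℕ => 2 * Real.exp (-2 * Gfun ((n:ℝ)/2))) atTop (nhds (1/π)) := by
  have h2π : (0:ℝ) < 2 * π := by positivity
  have h1 : Tendsto (fun n : ℕ => -2 * Gfun ((n:ℝ)/2)) atTop
      (nhds (-2 * (Real.log (2*π)/2))) := Gfun_half_tendsto.const_mul (-2)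
  have h2 := (Real.continuous_exp.tendsto _).comp h1
  have h3 := h2.const_mul (2:ℝ)
  have h4 : 2 * Real.exp (-2 * (Real.log (2*π)/2)) = 1/π := by
    have : -2 * (Real.log (2*π)/2) = -Real.log (2*π) := by ring
    rw [this, Real.exp_neg, Real.exp_log h2π]
    field_simp
  rw [h4] at h3
  exact h3.congr (fun n => rfl)

theorem Qfun_tendsto : Tendsto Qfun atTop (nhds (1/π)) := by
  apply base_tendsto.congr'
  filter_upwards [eventually_ge_atTop 1] with n hn
  exact (Qfun_eq n hn).symm

theorem Qfun_mono (n : ℕ) (hn : 1 ≤ n) : Qfun n < Qfun (n+1) := by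
  rw [Qfun_eq n hn, Qfun_eq (n+1) (by omega)]
  have hn' : (0:ℝ) < n := by exact_mod_cast hn
  have hlt : Gfun (((n:ℝ)+1)/2) < Gfun ((n:ℝ)/2) := by
    apply Gfun_strictAnti (mem_Ioi.mpr (by positivity)) (mem_Ioi.mpr (by positivity))
    linarith
  have : ((n+1:ℕ):ℝ)/2 = ((n:ℝ)+1)/2 := by push_cast; ring
  rw [this]
  have := Real.exp_lt_exp.mpr (by linarith : -2 * Gfun ((n:ℝ)/2) < -2 * Gfun (((n:ℝ)+1)/2))
  linarith [this]

lemma sqrt_two_div_tendsto :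
    Tendsto (fun n : ℕ => Real.sqrt (2/(n:ℝ))) atTop (nhds 0) := by
  have h1 : Tendsto (fun n : ℕ => 2/(n:ℝ)) atTop (nhds 0) :=
    tendsto_const_div_atTop_nhds_zero_nat 2
  have h2 := (Real.continuous_sqrt.tendsto (0:ℝ)).comp h1
  rw [Real.sqrt_zero] at h2
  exact h2.congr (fun n => rfl)

lemma E_tendsto (s : ℝ) :
    Tendsto (fun n : ℕ => (n:ℝ) * Real.log (((n:ℝ) + s * Real.sqrt (2*(n:ℝ)))/(n:ℝ))
      - (((n:ℝ) + s * Real.sqrt (2*(n:ℝ))) - (n:ℝ))) atTop (nhds (-s^2)) := by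
  set u : ℕ → ℝ := fun n => s * Real.sqrt (2/(n:ℝ)) with hu_def
  have hu : Tendsto u atTop (nhds 0) := by
    have h := sqrt_two_div_tendsto.const_mul s
    rw [mul_zero] at h
    exact h
  have habs : Tendsto (fun n => |u n|) atTop (nhds 0) := by
    have h := hu.abs
    rw [abs_zero] at h
    exact h
  have hsmall : ∀ᶠ n : ℕ in atTop, |u n| < 1/2 :=
    habs.eventually_lt_const (by norm_num)
  have hkey : ∀ᶠ n : ℕ in atTop,
      |((n:ℝ) * Real.log (((n:ℝ) + s * Real.sqrt (2*(n:ℝ)))/(n:ℝ))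
        - (((n:ℝ) + s * Real.sqrt (2*(n:ℝ))) - (n:ℝ))) + s^2|
      ≤ 4 * |s|^3 * Real.sqrt (2/(n:ℝ)) := by
    filter_upwards [hsmall, eventually_ge_atTop 1] with n hn1 hn2
    have hn' : (0:ℝ) < n := by exact_mod_cast hn2
    have hsq : Real.sqrt (2/(n:ℝ)) = Real.sqrt (2*(n:ℝ))/(n:ℝ) := by
      rw [show (2:ℝ)/(n:ℝ) = (2*(n:ℝ))/((n:ℝ)^2) by field_simp]
      rw [Real.sqrt_div (by positivity), Real.sqrt_sq hn'.le]
    have hRn : ((n:ℝ) + s * Real.sqrt (2*(n:ℝ)))/(n:ℝ) = 1 + u n := by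
      rw [hu_def]
      simp only
      rw [hsq]
      field_simp
    have hRd : ((n:ℝ) + s * Real.sqrt (2*(n:ℝ))) - (n:ℝ) = (n:ℝ) * u n := by
      rw [hu_def]
      simp only
      rw [hsq]
      field_simp
      ring
    have hu2 : (u n)^2 = s^2 * (2/(n:ℝ)) := by
      rw [hu_def]
      simp only
      rw [mul_pow, Real.sq_sqrt (by positivity)]
    have hs2 : s^2 = (n:ℝ) * (u n)^2 / 2 := by
      rw [hu2]
      field_simp
    have htaylor := Real.abs_log_sub_add_sum_range_le (x := -(u n)) (by rw [abs_neg]; linarith) 2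
    have hsum : (∑ i ∈ Finset.range 2, (-(u n)) ^ (i + 1) / (i + 1)) = -(u n) + (u n)^2/2 := by
      rw [Finset.sum_range_succ, Finset.sum_range_one]
      norm_num
    rw [hsum, abs_neg, sub_neg_eq_add] at htaylor
    norm_num at htaylor
    rw [hRn, hRd]
    have heq : ((n:ℝ) * Real.log (1 + u n) - (n:ℝ) * u n) + s^2
        = (n:ℝ) * ((-(u n) + (u n)^2/2) + Real.log (1 + u n)) := by
      rw [hs2]; ring
    rw [heq, abs_mul, abs_of_pos hn']
    have hb1 : |(-(u n) + (u n)^2/2) + Real.log (1 + u n)| ≤ |u n|^3 / (1 - |u n|) :=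
      htaylor
    have hb2 : |u n|^3 / (1 - |u n|) ≤ 2 * |u n|^3 := by
      rw [div_le_iff₀ (by linarith)]
      have h3 : (0:ℝ) ≤ |u n|^3 := by positivity
      nlinarith [h3, abs_nonneg (u n)]
    have hb3 : (n:ℝ) * |(-(u n) + (u n)^2/2) + Real.log (1 + u n)| ≤ (n:ℝ) * (2 * |u n|^3) := by
      apply mul_le_mul_of_nonneg_left _ hn'.le
      linarith
    apply le_trans hb3
    have huabs : |u n| = |s| * Real.sqrt (2/(n:ℝ)) := by
      rw [hu_def]
      simp only
      rw [abs_mul, abs_of_nonneg (Real.sqrt_nonneg _)]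
    rw [huabs]
    have hcube : (n:ℝ) * (2 * (|s| * Real.sqrt (2/(n:ℝ)))^3) =
        4 * |s|^3 * Real.sqrt (2/(n:ℝ)) * ((n:ℝ) * (2/(n:ℝ)) / 2) := by
      have h1 : (Real.sqrt (2/(n:ℝ)))^3 = (2/(n:ℝ)) * Real.sqrt (2/(n:ℝ)) := by
        rw [pow_succ, Real.sq_sqrt (by positivity)]
      rw [mul_pow, h1]
      ring
    rw [hcube]
    rw [show (n:ℝ) * (2/(n:ℝ)) / 2 = 1 by field_simp]
    rw [mul_one]
  have hg : Tendsto (fun n : ℕ => 4 * |s|^3 * Real.sqrt (2/(n:ℝ))) atTop (nhds 0) := by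
    have h := sqrt_two_div_tendsto.const_mul (4 * |s|^3)
    rw [mul_zero] at h
    exact h
  simp only [← Real.norm_eq_abs] at hkey
  have h0 := squeeze_zero_norm' hkey hg
  have := h0.add_const (-s^2)
  simp only [zero_add] at this
  apply this.congr
  intro n
  ring

end Aux

/-- `Q(n)` is strictly increasing in `n`, `lim_{n→∞} Q(n) = 1/π`, and for each
fixed `s ∈ ℝ`, `lim_{n→∞} Q_s(n) = e^{-s²}/π`. -/
theorem stmt18 :
    (∀ n : ℕ, 1 ≤ n → Qfun n < Qfun (n + 1)) ∧
    Filter.Tendsto Qfun Filter.atTop (nhds (1 / π)) ∧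
    (∀ s : ℝ, Filter.Tendsto (Qs s) Filter.atTop (nhds (Real.exp (-s ^ 2) / π))) := by
  refine ⟨Aux.Qfun_mono, Aux.Qfun_tendsto, ?_⟩
  intro s
  have hE := Aux.E_tendsto s
  have hexp := (Real.continuous_exp.tendsto _).comp hE
  have hprod := Aux.base_tendsto.mul hexp
  have hval : (1/π) * Real.exp (-s^2) = Real.exp (-s^2)/π := by ring
  rw [hval] at hprod
  apply hprod.congr'
  filter_upwards [eventually_ge_atTop 1,
    ((tendsto_natCast_atTop_atTop (R := ℝ)).eventually_gt_atTop (2*s^2))] with n hn1 hn2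
  have hn' : (0:ℝ) < n := by exact_mod_cast hn1
  set R : ℝ := (n:ℝ) + s * Real.sqrt (2*(n:ℝ)) with hR_def
  have hRpos : 0 < R := by
    rw [hR_def]
    by_contra hcon
    push_neg at hcon
    have h1 : s * Real.sqrt (2*(n:ℝ)) ≤ -(n:ℝ) := by linarith
    have h2 : (s * Real.sqrt (2*(n:ℝ)))^2 = s^2 * (2*(n:ℝ)) := by
      rw [mul_pow, Real.sq_sqrt (by positivity)]
    have h3 : ((n:ℝ))^2 ≤ (s * Real.sqrt (2*(n:ℝ)))^2 := by
      nlinarith [h1, hn']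
    nlinarith [h2, h3, hn', hn2]
  show (2 * Real.exp (-2 * Aux.Gfun ((n:ℝ)/2))) * Real.exp _ = Qs s n
  unfold Qs
  rw [Aux.Q_formula n hn1 R hRpos.le, Aux.Qval_eq n hn1 R hRpos]
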